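/- arXiv:2108.12615 — 6 statements merged into one kernel-verified Lean document; each statement's English description precedes it below -/
import Mathlib

section
/- Let A_1, ..., A_n be independent random variables with values in a measurable space X, and let f : X^n → ℝ be a bounded measurable function satisfying the bounded differences condition: for every index i and all values a_1,...,a_n and a_i' in X, |f(a_1,...,a_n) − f(a_1,...,a_{i−1}, a_i', a_{i+1},...,a_n)| ≤ c. Then Var[f(A_1,...,A_n)] ≤ (1/4) n c². -/
/-!
The law of `(A₁, …, Aₙ)` is the product of the laws of the `Aᵢ`, so it suffices to bound the
variance of `f` under a product measure. Writing that measure as `μ₀ ⊗ ν` by splitting off the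
first coordinate, the law of total variance writes the variance as the `μ₀`-average of the
variances of the sections `f (a, ·)`, each at most `(n - 1) c² / 4` by induction, plus the
variance of `a ↦ ∫ f (a, y) dν(y)`. The latter function oscillates by at most `c`, so
Popoviciu's inequality bounds its variance by `c² / 4`.
-/

open MeasureTheory ProbabilityTheory

section BoundedFunctions

variable {α : Type*} [MeasurableSpace α] {μ : Measure α} {g : α → ℝ} {M : ℝ}

lemma abs_integral_le_of_abs_le [IsProbabilityMeasure μ] (hM : ∀ x, |g x| ≤ M) :
    |∫ x, g x ∂μ| ≤ M := by
  simpa using norm_integral_le_of_norm_le_const (μ := μ) (f := g) (ae_of_all _ hM)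

lemma variance_eq_integral_sq_sub_sq_integral [IsProbabilityMeasure μ] (hg : Measurable g)
    (hM : ∀ x, |g x| ≤ M) : Var[g; μ] = ∫ x, g x ^ 2 ∂μ - (∫ x, g x ∂μ) ^ 2 :=
  variance_eq_sub (.of_bound hg.aestronglyMeasurable M (ae_of_all _ hM))

lemma variance_le_sq_div_four_of_sub_le [IsProbabilityMeasure μ] (hg : Measurable g) {c : ℝ}
    (hc : ∀ a a', g a - g a' ≤ c) : Var[g; μ] ≤ c ^ 2 / 4 := by
  have hne := nonempty_of_isProbabilityMeasure μ
  have hbdd : BddBelow (Set.range g) := ⟨g hne.some - c, by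
    rintro _ ⟨a, rfl⟩
    linarith [hc hne.some a]⟩
  have hIcc : ∀ a, g a ∈ Set.Icc (⨅ a, g a) ((⨅ a, g a) + c) := fun a =>
    ⟨ciInf_le hbdd a, by linarith [le_ciInf fun a' => (by linarith [hc a a'] : g a - c ≤ g a')]⟩
  calc Var[g; μ] ≤ (((⨅ a, g a) + c - ⨅ a, g a) / 2) ^ 2 :=
        variance_le_sq_of_bounded (ae_of_all _ hIcc) hg.aemeasurable
    _ = c ^ 2 / 4 := by ring

end BoundedFunctions

section LawOfTotalVariance

variable {α β : Type*} [MeasurableSpace α] [MeasurableSpace β] {μ : Measure α} {ν : Measure β}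
  [IsProbabilityMeasure μ] [IsProbabilityMeasure ν] {F : α × β → ℝ} {M : ℝ}

lemma variance_prod_eq_integral_variance_add_variance_integral (hF : Measurable F)
    (hM : ∀ z, |F z| ≤ M) :
    Var[F; μ.prod ν] =
      ∫ a, Var[fun b => F (a, b); ν] ∂μ + Var[fun a => ∫ b, F (a, b) ∂ν; μ] := by
  have abs_sq_le {x : ℝ} (hx : |x| ≤ M) : |x ^ 2| ≤ M ^ 2 := by
    rw [abs_pow]; exact pow_le_pow_left₀ (abs_nonneg _) hx 2
  have hM2 : ∀ z, |F z ^ 2| ≤ M ^ 2 := fun z => abs_sq_le (hM z)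
  have hF2 : Measurable fun z => F z ^ 2 := hF.pow_const 2
  have hsec : ∀ a, Var[fun b => F (a, b); ν] =
      ∫ b, F (a, b) ^ 2 ∂ν - (∫ b, F (a, b) ∂ν) ^ 2 := fun a =>
    variance_eq_integral_sq_sub_sq_integral (hF.comp measurable_prodMk_left) (fun b => hM _)
  have hmean : ∀ a, |∫ b, F (a, b) ∂ν| ≤ M := fun a => abs_integral_le_of_abs_le fun b => hM _
  have hmeanm : Measurable fun a => ∫ b, F (a, b) ∂ν :=
    hF.stronglyMeasurable.integral_prod_right'.measurable
  have hint₁ : Integrable (fun a => ∫ b, F (a, b) ^ 2 ∂ν) μ :=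
    .of_bound hF2.stronglyMeasurable.integral_prod_right'.aestronglyMeasurable (M ^ 2)
      (ae_of_all _ fun a => abs_integral_le_of_abs_le fun b => hM2 _)
  have hint₂ : Integrable (fun a => (∫ b, F (a, b) ∂ν) ^ 2) μ :=
    .of_bound (hmeanm.pow_const 2).aestronglyMeasurable (M ^ 2)
      (ae_of_all _ fun a => abs_sq_le (hmean a))
  rw [variance_eq_integral_sq_sub_sq_integral hF hM,
    variance_eq_integral_sq_sub_sq_integral hmeanm hmean, funext hsec, integral_sub hint₁ hint₂,
    integral_prod _ (.of_bound hF.aestronglyMeasurable M (ae_of_all _ hM)),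
    integral_prod _ (.of_bound hF2.aestronglyMeasurable (M ^ 2) (ae_of_all _ hM2))]
  ring

end LawOfTotalVariance

def BoundedDifferences {ι X : Type*} [DecidableEq ι] (f : (ι → X) → ℝ) (c : ℝ) : Prop :=
  ∀ (i : ι) (x : ι → X) (a' : X), |f x - f (Function.update x i a')| ≤ c

namespace BoundedDifferences

variable {X : Type*} {n : ℕ} {f : (Fin (n + 1) → X) → ℝ} {c : ℝ}

lemma comp_cons (hf : BoundedDifferences f c) (a : X) :
    BoundedDifferences (fun y : Fin n → X => f (Fin.cons a y)) c := fun i y a' => by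
  simpa [Fin.cons_update] using hf i.succ (Fin.cons a y) a'

lemma abs_sub_cons_le (hf : BoundedDifferences f c) (a a' : X) (y : Fin n → X) :
    |f (Fin.cons a y) - f (Fin.cons a' y)| ≤ c := by
  simpa [Fin.update_cons_zero] using hf 0 (Fin.cons a y) a'

end BoundedDifferences

lemma measurePreserving_fin_cons {X : Type*} [MeasurableSpace X] {n : ℕ}
    (μ : Fin (n + 1) → Measure X) [∀ i, SigmaFinite (μ i)] :
    MeasurePreserving (fun p : X × (Fin n → X) => (Fin.cons p.1 p.2 : Fin (n + 1) → X))
      ((μ 0).prod (Measure.pi fun j => μ j.succ)) (Measure.pi μ) := by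
  convert (measurePreserving_piFinSuccAbove μ 0).symm using 1
  · ext p : 1
    simp [MeasurableEquiv.piFinSuccAbove_symm_apply, Fin.insertNthEquiv, Fin.insertNth_zero']
  · rfl

theorem variance_pi_le_of_boundedDifferences {X : Type*} [MeasurableSpace X] :
    ∀ {n : ℕ} (μ : Fin n → Measure X) [∀ i, IsProbabilityMeasure (μ i)]
      {f : (Fin n → X) → ℝ}, Measurable f → ∀ {M : ℝ}, (∀ x, |f x| ≤ M) →
      ∀ {c : ℝ}, BoundedDifferences f c → Var[f; Measure.pi μ] ≤ n * c ^ 2 / 4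
  | 0, μ, _, f, hf, M, hM, c, hfc => by
    simpa using variance_le_sq_div_four_of_sub_le (μ := Measure.pi μ) hf (c := 0)
      fun x y => by rw [Subsingleton.elim x y, sub_self]
  | n + 1, μ, _, f, hf, M, hM, c, hfc => by
    set ν := Measure.pi fun j : Fin n => μ j.succ
    set F : X × (Fin n → X) → ℝ := fun p => f (Fin.cons p.1 p.2)
    have hcons := measurePreserving_fin_cons μ
    have hF : Measurable F := hf.comp hcons.measurable
    have hsec : ∀ a, Var[fun y => F (a, y); ν] ≤ n * c ^ 2 / 4 := fun a =>
      variance_pi_le_of_boundedDifferences _ (hF.comp measurable_prodMk_left) (fun _ => hM _)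
        (hfc.comp_cons a)
    have hmean : Var[fun a => ∫ y, F (a, y) ∂ν; μ 0] ≤ c ^ 2 / 4 := by
      refine variance_le_sq_div_four_of_sub_le
        hF.stronglyMeasurable.integral_prod_right'.measurable fun a a' => ?_
      have hint : ∀ a, Integrable (fun y => F (a, y)) ν := fun a =>
        .of_bound (hF.comp measurable_prodMk_left).aestronglyMeasurable M
          (ae_of_all _ fun _ => hM _)
      rw [← integral_sub (hint a) (hint a')]
      exact (le_abs_self _).trans (abs_integral_le_of_abs_le fun y => hfc.abs_sub_cons_le a a' y)
    calc Var[f; Measure.pi μ] = Var[F; (μ 0).prod ν] :=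
          (hcons.variance_fun_comp hf.aemeasurable).symm
      _ = ∫ a, Var[fun y => F (a, y); ν] ∂μ 0 + Var[fun a => ∫ y, F (a, y) ∂ν; μ 0] :=
        variance_prod_eq_integral_variance_add_variance_integral hF fun _ => hM _
      _ ≤ n * c ^ 2 / 4 + c ^ 2 / 4 := by
        gcongr
        exact (integral_mono_of_nonneg (ae_of_all _ fun a => variance_nonneg _ _)
          (integrable_const _) (ae_of_all _ hsec)).trans (by simp)
      _ = (n + 1 : ℕ) * c ^ 2 / 4 := by push_cast; ring

/-- Bounded differences inequality (corollary of Efron–Stein): if `A_1, …, A_n` are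
independent random variables with values in `X` and `f : X^n → ℝ` is a bounded measurable
function such that changing one coordinate changes the value of `f` by at most `c`, then
`Var[f(A_1,…,A_n)] ≤ (1/4) n c²`. -/
theorem bounded_differences_variance
    {Ω X : Type*} [MeasureSpace Ω] [IsProbabilityMeasure (ℙ : Measure Ω)]
    [MeasurableSpace X] {n : ℕ} (A : Fin n → Ω → X)
    (hmeas : ∀ i, Measurable (A i))
    (hindep : iIndepFun A ℙ)
    (f : (Fin n → X) → ℝ) (hf : Measurable f)
    (hbdd : ∃ M : ℝ, ∀ x, |f x| ≤ M)
    (c : ℝ)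
    (hdiff : ∀ (i : Fin n) (x : Fin n → X) (a' : X),
      |f x - f (Function.update x i a')| ≤ c) :
    variance (fun ω => f (fun i => A i ω)) ℙ ≤ (1 / 4 : ℝ) * n * c ^ 2 := by
  obtain ⟨M, hM⟩ := hbdd
  have hA : Measurable fun ω i => A i ω := measurable_pi_lambda _ hmeas
  have : ∀ i, IsProbabilityMeasure ((ℙ : Measure Ω).map (A i)) := fun i =>
    Measure.isProbabilityMeasure_map (hmeas i).aemeasurable
  rw [← Function.comp_def f, ← variance_map hf.aemeasurable hA.aemeasurable,
    hindep.map_fun_eq_pi_map fun i => (hmeas i).aemeasurable]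
  calc _ ≤ n * c ^ 2 / 4 := variance_pi_le_of_boundedDifferences _ hf hM hdiff
    _ = (1 / 4 : ℝ) * n * c ^ 2 := by ring
end

section
/- Let ψ : ℝ₊² → ℝ ∪ {+∞} be lower semi-continuous, nondecreasing (in the coordinatewise order), and convex, and not identically +∞. Define ψ*(z) = sup_{y ∈ ℝ₊²}(y·z − ψ(y)) and ψ**(x) = sup_{z ∈ ℝ₊²}(z·x − ψ*(z)). Then ψ**(x) = ψ(x) for all x ∈ ℝ₊². -/
open Set

private lemma sep_lemma (E : Set ((ℝ × ℝ) × ℝ)) (hEc : Convex ℝ E) (hEcl : IsClosed E)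
    (p : (ℝ × ℝ) × ℝ) (hp : p ∉ E) :
    ∃ a b s u : ℝ, a * p.1.1 + b * p.1.2 + s * p.2 < u ∧
      ∀ q ∈ E, u < a * q.1.1 + b * q.1.2 + s * q.2 := by
  obtain ⟨f, u, hfp, hfE⟩ := geometric_hahn_banach_point_closed hEc hEcl hp
  have hf : ∀ q : (ℝ × ℝ) × ℝ,
      f q = f ((1,0),0) * q.1.1 + f ((0,1),0) * q.1.2 + f ((0,0),1) * q.2 := by
    intro q
    have hq : q = q.1.1 • ((1,0),0) + q.1.2 • ((0,1),0) + q.2 • ((0,0),1) := by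
      ext <;> simp
    calc f q = f (q.1.1 • ((1,0),0) + q.1.2 • ((0,1),0) + q.2 • ((0,0),1)) := by rw [← hq]
    _ = f ((1,0),0) * q.1.1 + f ((0,1),0) * q.1.2 + f ((0,0),1) * q.2 := by
        rw [map_add, map_add, map_smul, map_smul, map_smul, smul_eq_mul, smul_eq_mul,
          smul_eq_mul]; ring
  refine ⟨f ((1,0),0), f ((0,1),0), f ((0,0),1), u, ?_, fun q hq => ?_⟩
  · have := hfp; rw [hf p] at this; linarith
  · have := hfE q hq; rw [hf q] at this; linarith

private lemma epi_convex (ψ : ℝ × ℝ → EReal)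
    (hconv : ∀ x ∈ Ici (0 : ℝ × ℝ), ∀ y ∈ Ici (0 : ℝ × ℝ), ∀ a b : ℝ,
      0 ≤ a → 0 ≤ b → a + b = 1 →
      ψ (a • x + b • y) ≤ (a : EReal) * ψ x + (b : EReal) * ψ y) :
    Convex ℝ {p : (ℝ × ℝ) × ℝ | p.1 ∈ Ici (0 : ℝ × ℝ) ∧ ψ p.1 ≤ (p.2 : EReal)} := by
  rintro p ⟨hp1, hp2⟩ q ⟨hq1, hq2⟩ a b ha hb hab
  have hp11 : (0:ℝ) ≤ p.1.1 := (Prod.le_def.1 hp1).1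
  have hp12 : (0:ℝ) ≤ p.1.2 := (Prod.le_def.1 hp1).2
  have hq11 : (0:ℝ) ≤ q.1.1 := (Prod.le_def.1 hq1).1
  have hq12 : (0:ℝ) ≤ q.1.2 := (Prod.le_def.1 hq1).2
  have h1 : a • p.1 + b • q.1 ∈ Ici (0 : ℝ × ℝ) := by
    refine mem_Ici.2 (Prod.le_def.2 ⟨?_, ?_⟩)
    · show (0:ℝ) ≤ a * p.1.1 + b * q.1.1
      exact add_nonneg (mul_nonneg ha hp11) (mul_nonneg hb hq11)
    · show (0:ℝ) ≤ a * p.1.2 + b * q.1.2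
      exact add_nonneg (mul_nonneg ha hp12) (mul_nonneg hb hq12)
  refine ⟨h1, ?_⟩
  calc ψ ((a • p + b • q).1) = ψ (a • p.1 + b • q.1) := rfl
  _ ≤ (a : EReal) * ψ p.1 + (b : EReal) * ψ q.1 := hconv p.1 hp1 q.1 hq1 a b ha hb hab
  _ ≤ (a : EReal) * (p.2 : EReal) + (b : EReal) * (q.2 : EReal) :=
      add_le_add (mul_le_mul_of_nonneg_left hp2 (by exact_mod_cast ha))
        (mul_le_mul_of_nonneg_left hq2 (by exact_mod_cast hb))
  _ = ((a * p.2 + b * q.2 : ℝ) : EReal) := by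
      rw [EReal.coe_add, EReal.coe_mul, EReal.coe_mul]
  _ = (((a • p + b • q).2 : ℝ) : EReal) := rfl

private lemma epi_closed (ψ : ℝ × ℝ → EReal)
    (hlsc : LowerSemicontinuousOn ψ (Ici (0 : ℝ × ℝ))) :
    IsClosed {p : (ℝ × ℝ) × ℝ | p.1 ∈ Ici (0 : ℝ × ℝ) ∧ ψ p.1 ≤ (p.2 : EReal)} := by
  apply IsSeqClosed.isClosed
  intro f p hf hfp
  have hf1 : Filter.Tendsto (fun n => (f n).1) Filter.atTop (nhds p.1) :=
    (continuous_fst.tendsto p).comp hfp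
  have hf2 : Filter.Tendsto (fun n => (f n).2) Filter.atTop (nhds p.2) :=
    (continuous_snd.tendsto p).comp hfp
  have hmem : ∀ n, (f n).1 ∈ Ici (0 : ℝ × ℝ) := fun n => (hf n).1
  have hp1 : p.1 ∈ Ici (0 : ℝ × ℝ) :=
    isClosed_Ici.mem_of_tendsto hf1 (Filter.Eventually.of_forall hmem)
  refine ⟨hp1, ?_⟩
  refine EReal.ge_of_forall_gt_iff_ge.1 fun c hc => ?_
  have hlsc' := hlsc p.1 hp1 (c : EReal) hc
  have htw : Filter.Tendsto (fun n => (f n).1) Filter.atTop (nhdsWithin p.1 (Ici (0:ℝ×ℝ))) :=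
    tendsto_nhdsWithin_of_tendsto_nhds_of_eventually_within _ hf1
      (Filter.Eventually.of_forall hmem)
  have hev : ∀ᶠ n in Filter.atTop, (c : ℝ) ≤ (f n).2 := by
    filter_upwards [htw.eventually hlsc'] with n hn
    have : (c : EReal) < ((f n).2 : EReal) := lt_of_lt_of_le hn (hf n).2
    exact_mod_cast this.le
  have : (c : ℝ) ≤ p.2 := ge_of_tendsto hf2 hev
  exact_mod_cast this

private lemma sub_le_neg_of_add_le {A c : ℝ} {v : EReal} (h : ((A + c : ℝ) : EReal) ≤ v) :
    ((A : ℝ) : EReal) - v ≤ ((-c : ℝ) : EReal) := by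
  induction v with
  | bot => simp at h
  | coe r =>
    have h' : A + c ≤ r := by exact_mod_cast h
    rw [← EReal.coe_sub]
    exact_mod_cast (by linarith : A - r ≤ -c)
  | top => simp [EReal.sub_top]


/-- Fenchel–Moreau biconjugation identity on the cone `ℝ₊²`: if
`ψ : ℝ₊² → ℝ ∪ {+∞}` is lower semi-continuous, nondecreasing (for the coordinatewise
order), convex and not identically `+∞`, then `ψ** = ψ` on `ℝ₊²`, where
`ψ*(z) = sup_{y ∈ ℝ₊²}(y·z − ψ(y))` and `ψ**(x) = sup_{z ∈ ℝ₊²}(z·x − ψ*(z))`. -/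
theorem fenchel_moreau_cone
    (ψ : ℝ × ℝ → EReal)
    (hlsc : LowerSemicontinuousOn ψ (Ici (0 : ℝ × ℝ)))
    (hmono : MonotoneOn ψ (Ici (0 : ℝ × ℝ)))
    (hconv : ∀ x ∈ Ici (0 : ℝ × ℝ), ∀ y ∈ Ici (0 : ℝ × ℝ), ∀ a b : ℝ,
      0 ≤ a → 0 ≤ b → a + b = 1 →
      ψ (a • x + b • y) ≤ (a : EReal) * ψ x + (b : EReal) * ψ y)
    (hnobot : ∀ x ∈ Ici (0 : ℝ × ℝ), ψ x ≠ ⊥)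
    (hproper : ∃ x ∈ Ici (0 : ℝ × ℝ), ψ x ≠ ⊤)
    (ψs : ℝ × ℝ → EReal)
    (hψs : ∀ z : ℝ × ℝ, ψs z =
      ⨆ y ∈ Ici (0 : ℝ × ℝ), (((y.1 * z.1 + y.2 * z.2 : ℝ) : EReal) - ψ y)) :
    ∀ x ∈ Ici (0 : ℝ × ℝ),
      (⨆ z ∈ Ici (0 : ℝ × ℝ), (((z.1 * x.1 + z.2 * x.2 : ℝ) : EReal) - ψs z)) = ψ x := by
  intro x hx
  set E := {p : (ℝ × ℝ) × ℝ | p.1 ∈ Ici (0 : ℝ × ℝ) ∧ ψ p.1 ≤ (p.2 : EReal)} with hE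
  have hEc : Convex ℝ E := epi_convex ψ hconv
  have hEcl : IsClosed E := epi_closed ψ hlsc
  obtain ⟨x₁, hx₁, hx₁t⟩ := hproper
  obtain ⟨r₁, hr₁⟩ : ∃ r : ℝ, ψ x₁ = (r : EReal) :=
    ⟨(ψ x₁).toReal, (EReal.coe_toReal hx₁t (hnobot x₁ hx₁)).symm⟩
  -- easy direction
  have hle : (⨆ z ∈ Ici (0:ℝ×ℝ), (((z.1*x.1+z.2*x.2 : ℝ):EReal) - ψs z)) ≤ ψ x := by
    refine iSup₂_le fun z hz => ?_
    have h1 : ((x.1*z.1+x.2*z.2 : ℝ):EReal) - ψ x ≤ ψs z := by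
      rw [hψs z]; exact le_iSup₂_of_le x hx le_rfl
    rcases eq_or_ne (ψ x) ⊤ with h | h
    · rw [h]; exact le_top
    obtain ⟨r, hr⟩ : ∃ r : ℝ, ψ x = (r : EReal) :=
      ⟨(ψ x).toReal, (EReal.coe_toReal h (hnobot x hx)).symm⟩
    rw [hr] at h1 ⊢
    rw [← EReal.coe_sub] at h1
    calc ((z.1*x.1+z.2*x.2 : ℝ):EReal) - ψs z
        ≤ ((z.1*x.1+z.2*x.2 : ℝ):EReal) - ((x.1*z.1+x.2*z.2 - r : ℝ):EReal) :=
          EReal.sub_le_sub le_rfl h1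
      _ = ((r : ℝ) : EReal) := by rw [← EReal.coe_sub]; congr 1; ring
  -- key: every affine minorant (arbitrary slope) lower-bounds the biconjugate at x
  have key : ∀ w : ℝ × ℝ, ∀ c : ℝ,
      (∀ y ∈ Ici (0:ℝ×ℝ), ((w.1*y.1+w.2*y.2 + c : ℝ):EReal) ≤ ψ y) →
      ((w.1*x.1+w.2*x.2 + c : ℝ):EReal) ≤
        ⨆ z ∈ Ici (0:ℝ×ℝ), (((z.1*x.1+z.2*x.2 : ℝ):EReal) - ψs z) := by
    intro w c hw
    set w' : ℝ × ℝ := (max w.1 0, max w.2 0) with hw'def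
    have hw'm : w' ∈ Ici (0:ℝ×ℝ) :=
      mem_Ici.2 (Prod.le_def.2 ⟨le_max_right _ _, le_max_right _ _⟩)
    have hmin : ∀ y ∈ Ici (0:ℝ×ℝ), ((w'.1*y.1+w'.2*y.2 + c : ℝ):EReal) ≤ ψ y := by
      intro y hy
      have hy1 : (0:ℝ) ≤ y.1 := (Prod.le_def.1 hy).1
      have hy2 : (0:ℝ) ≤ y.2 := (Prod.le_def.1 hy).2
      set y' : ℝ × ℝ := (if 0 ≤ w.1 then y.1 else 0, if 0 ≤ w.2 then y.2 else 0) with hy'def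
      have hy'm : y' ∈ Ici (0:ℝ×ℝ) := by
        refine mem_Ici.2 (Prod.le_def.2 ⟨?_, ?_⟩) <;> dsimp only [y'] <;> split_ifs <;>
          first | exact hy1 | exact hy2 | exact le_rfl
      have hy'le : y' ≤ y := by
        refine Prod.le_def.2 ⟨?_, ?_⟩ <;> dsimp only [y'] <;> split_ifs <;>
          first | exact le_rfl | exact hy1 | exact hy2
      have e1 : w'.1 * y.1 = w.1 * y'.1 := by
        dsimp only [w', y']
        rcases le_or_gt 0 w.1 with h|h
        · rw [max_eq_left h, if_pos h]
        · rw [max_eq_right h.le, if_neg (not_le.2 h), mul_zero, zero_mul]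
      have e2 : w'.2 * y.2 = w.2 * y'.2 := by
        dsimp only [w', y']
        rcases le_or_gt 0 w.2 with h|h
        · rw [max_eq_left h, if_pos h]
        · rw [max_eq_right h.le, if_neg (not_le.2 h), mul_zero, zero_mul]
      calc ((w'.1*y.1+w'.2*y.2 + c : ℝ):EReal)
          = ((w.1*y'.1+w.2*y'.2 + c : ℝ):EReal) := by rw [e1, e2]
        _ ≤ ψ y' := hw y' hy'm
        _ ≤ ψ y := hmono hy'm hy hy'le
    have hconj : ψs w' ≤ ((-c : ℝ):EReal) := by
      rw [hψs w']
      refine iSup₂_le fun y hy => ?_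
      have h1 := hmin y hy
      have heq : y.1*w'.1+y.2*w'.2 = w'.1*y.1+w'.2*y.2 := by ring
      rw [heq]
      exact sub_le_neg_of_add_le h1
    have hterm : ((w'.1*x.1+w'.2*x.2 : ℝ):EReal) - ψs w' ≤
        ⨆ z ∈ Ici (0:ℝ×ℝ), (((z.1*x.1+z.2*x.2 : ℝ):EReal) - ψs z) :=
      le_iSup₂_of_le w' hw'm le_rfl
    have hstep : ((w'.1*x.1+w'.2*x.2 + c : ℝ):EReal) ≤
        ((w'.1*x.1+w'.2*x.2 : ℝ):EReal) - ψs w' := by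
      have h2 : ((w'.1*x.1+w'.2*x.2 + c : ℝ):EReal)
          = ((w'.1*x.1+w'.2*x.2:ℝ):EReal) - ((-c:ℝ):EReal) := by
        rw [← EReal.coe_sub]; congr 1; ring
      rw [h2]; exact EReal.sub_le_sub le_rfl hconj
    refine le_trans ?_ (le_trans hstep hterm)
    have hx1 : (0:ℝ) ≤ x.1 := (Prod.le_def.1 hx).1
    have hx2 : (0:ℝ) ≤ x.2 := (Prod.le_def.1 hx).2
    refine EReal.coe_le_coe_iff.2 ?_
    have g1 : w.1 * x.1 ≤ w'.1 * x.1 := mul_le_mul_of_nonneg_right (le_max_left _ _) hx1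
    have g2 : w.2 * x.2 ≤ w'.2 * x.2 := mul_le_mul_of_nonneg_right (le_max_left _ _) hx2
    linarith
  -- generic: slopes from separating hyperplanes are nonnegative in the last coordinate
  have hs0 : ∀ a b s u : ℝ, (∀ q ∈ E, u < a*q.1.1 + b*q.1.2 + s*q.2) → 0 ≤ s := by
    intro a b s u hsep
    by_contra hs
    push_neg at hs
    set t := max r₁ ((u - a*x₁.1 - b*x₁.2 - 1)/s) with htdef
    have hmem : ((x₁, t) : (ℝ×ℝ)×ℝ) ∈ E :=
      ⟨hx₁, by rw [hr₁]; exact EReal.coe_le_coe_iff.2 (le_max_left _ _)⟩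
    have h := hsep _ hmem
    have ht : (u - a*x₁.1 - b*x₁.2 - 1)/s ≤ t := le_max_right _ _
    have h2 : s * t ≤ u - a*x₁.1 - b*x₁.2 - 1 := by
      have h3 := mul_le_mul_of_nonpos_left ht hs.le
      rw [mul_comm s ((u - a*x₁.1 - b*x₁.2 - 1)/s), div_mul_cancel₀ _ (ne_of_lt hs)] at h3
      linarith [h3]
    simp only at h
    linarith
  -- minorant from a separating hyperplane with positive vertical slope
  have hminsep : ∀ a b s u : ℝ, 0 < s → (∀ q ∈ E, u < a*q.1.1 + b*q.1.2 + s*q.2) →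
      ∀ y ∈ Ici (0:ℝ×ℝ), (((-a/s)*y.1 + (-b/s)*y.2 + u/s : ℝ):EReal) ≤ ψ y := by
    intro a b s u hs hsep y hy
    rcases eq_or_ne (ψ y) ⊤ with h|h
    · rw [h]; exact le_top
    obtain ⟨t, ht⟩ : ∃ t:ℝ, ψ y = (t:EReal) :=
      ⟨(ψ y).toReal, (EReal.coe_toReal h (hnobot y hy)).symm⟩
    have hmem : ((y,t) : (ℝ×ℝ)×ℝ) ∈ E := ⟨hy, le_of_eq ht⟩
    have h2 := hsep _ hmem
    rw [ht]
    refine EReal.coe_le_coe_iff.2 ?_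
    have heq : (-a/s)*y.1 + (-b/s)*y.2 + u/s = (u - a*y.1 - b*y.2)/s := by
      field_simp; ring
    rw [heq, div_le_iff₀ hs]
    simp only at h2
    linarith
  -- hard direction
  refine le_antisymm hle ?_
  by_contra hlt'
  rw [not_le] at hlt'
  obtain ⟨r, hr1, hr2⟩ := EReal.exists_between_coe_real hlt'
  have hnotxr : ((x, r) : (ℝ×ℝ)×ℝ) ∉ E := by
    rintro ⟨-, h2⟩
    exact absurd h2 (not_le.2 hr2)
  obtain ⟨a, b, s, u, hpt, hsep'⟩ := sep_lemma E hEc hEcl (x, r) hnotxr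
  simp only at hpt
  have hs : 0 ≤ s := hs0 _ _ _ _ hsep'
  rcases hs.lt_or_eq with hspos | hszero
  · have hmin := hminsep a b s u hspos hsep'
    have hk := key (-a/s, -b/s) (u/s) hmin
    have hval : r < (-a/s)*x.1 + (-b/s)*x.2 + u/s := by
      have heq : (-a/s)*x.1 + (-b/s)*x.2 + u/s = (u - a*x.1 - b*x.2)/s := by
        field_simp; ring
      rw [heq, lt_div_iff₀ hspos]
      linarith
    have hfin : (r:EReal) < ⨆ z ∈ Ici (0:ℝ×ℝ), (((z.1*x.1+z.2*x.2 : ℝ):EReal) - ψs z) :=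
      lt_of_lt_of_le (EReal.coe_lt_coe_iff.2 hval) hk
    exact (lt_irrefl _ (hr1.trans hfin)).elim
  · -- vertical hyperplane: combine with a base minorant
    subst hszero
    simp only [zero_mul, add_zero] at hpt
    -- base minorant from separating (x₁, r₁ - 1)
    have hnot₁ : ((x₁, r₁ - 1) : (ℝ×ℝ)×ℝ) ∉ E := by
      rintro ⟨-, h2⟩
      rw [hr₁] at h2
      have : r₁ ≤ r₁ - 1 := EReal.coe_le_coe_iff.1 h2
      linarith
    obtain ⟨a₁, b₁, s₁, u₁, hpt₁, hsep₁⟩ := sep_lemma E hEc hEcl _ hnot₁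
    simp only at hpt₁
    have hs₁ : 0 ≤ s₁ := hs0 _ _ _ _ hsep₁
    have hs₁' : 0 < s₁ := by
      rcases hs₁.lt_or_eq with h|h
      · exact h
      exfalso
      have hmem : ((x₁, r₁) : (ℝ×ℝ)×ℝ) ∈ E := ⟨hx₁, le_of_eq hr₁⟩
      have h4 := hsep₁ _ hmem
      simp only at h4
      rw [← h] at hpt₁ h4
      simp only [zero_mul, add_zero] at hpt₁ h4
      linarith
    have hbase := hminsep a₁ b₁ s₁ u₁ hs₁' hsep₁
    have hd : 0 < u - (a*x.1 + b*x.2) := by linarith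
    set lam := max 0 ((r + 1 - ((-a₁/s₁)*x.1 + (-b₁/s₁)*x.2 + u₁/s₁))/(u - (a*x.1 + b*x.2)))
      with hlamdef
    have hlam : 0 ≤ lam := le_max_left _ _
    have hminl : ∀ y ∈ Ici (0:ℝ×ℝ),
        (((((-a₁/s₁) - lam*a)*y.1 + ((-b₁/s₁) - lam*b)*y.2 + (u₁/s₁ + lam*u)) : ℝ):EReal)
          ≤ ψ y := by
      intro y hy
      rcases eq_or_ne (ψ y) ⊤ with h|h
      · rw [h]; exact le_top
      obtain ⟨t, ht⟩ : ∃ t:ℝ, ψ y = (t:EReal) :=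
        ⟨(ψ y).toReal, (EReal.coe_toReal h (hnobot y hy)).symm⟩
      have hyE : ((y,t) : (ℝ×ℝ)×ℝ) ∈ E := ⟨hy, le_of_eq ht⟩
      have h2 := hsep' _ hyE
      simp only [zero_mul, add_zero] at h2
      have h3 := hbase y hy
      rw [ht] at h3 ⊢
      have h3' : (-a₁/s₁)*y.1 + (-b₁/s₁)*y.2 + u₁/s₁ ≤ t := EReal.coe_le_coe_iff.1 h3
      refine EReal.coe_le_coe_iff.2 ?_
      have hprod : lam * (u - (a*y.1 + b*y.2)) ≤ 0 :=
        mul_nonpos_of_nonneg_of_nonpos hlam (by linarith)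
      nlinarith [hprod, h3']
    have hk := key ((-a₁/s₁) - lam*a, (-b₁/s₁) - lam*b) (u₁/s₁ + lam*u) hminl
    have hval : r < ((-a₁/s₁) - lam*a)*x.1 + ((-b₁/s₁) - lam*b)*x.2 + (u₁/s₁ + lam*u) := by
      have hlam2 : (r + 1 - ((-a₁/s₁)*x.1 + (-b₁/s₁)*x.2 + u₁/s₁))/(u - (a*x.1 + b*x.2)) ≤ lam :=
        le_max_right _ _
      have h5 := mul_le_mul_of_nonneg_right hlam2 hd.le
      rw [div_mul_cancel₀ _ (ne_of_gt hd)] at h5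
      nlinarith [h5]
    have hfin : (r:EReal) < ⨆ z ∈ Ici (0:ℝ×ℝ), (((z.1*x.1+z.2*x.2 : ℝ):EReal) - ψs z) :=
      lt_of_lt_of_le (EReal.coe_lt_coe_iff.2 hval) hk
    exact (lt_irrefl _ (hr1.trans hfin)).elim
end

section
/- Let K ⊂ ℝ² be compact, ψ* : K → ℝ lower semi-continuous, and H : ℝ² → ℝ continuous. Define f(t,x) = sup_{z ∈ K}{ z·x − ψ*(z) + t H(z) }. If f is differentiable at an interior point (t,x) of its domain and the supremum is attained at some z ∈ K, then ∇_x f(t,x) = z and ∂_t f(t,x) = H(z); consequently ∂_t f(t,x) = H(∇_x f(t,x)), i.e. f satisfies the Hamilton–Jacobi equation at every interior point of differentiability. -/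
open Set

/-- A function lower semicontinuous on a compact set is bounded below on it. -/
lemma lsc_bddBelow_on_compact {K : Set (ℝ × ℝ)} (hK : IsCompact K)
    {ψ : ℝ × ℝ → ℝ} (hψ : LowerSemicontinuousOn ψ K) :
    ∃ m : ℝ, ∀ y ∈ K, m ≤ ψ y := by
  rcases K.eq_empty_or_nonempty with rfl | hne
  · exact ⟨0, by simp⟩
  have h : ∀ w : ℝ × ℝ, ∃ U : Set (ℝ × ℝ), IsOpen U ∧ w ∈ U ∧
      (w ∈ K → ∀ y ∈ U ∩ K, ψ w - 1 < ψ y) := by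
    intro w
    by_cases hw : w ∈ K
    · have := hψ w hw (ψ w - 1) (by linarith)
      rcases mem_nhdsWithin.1 this with ⟨U, hUo, hwU, hU⟩
      exact ⟨U, hUo, hwU, fun _ y hy => hU hy⟩
    · exact ⟨univ, isOpen_univ, mem_univ _, fun h => absurd h hw⟩
  choose U hUo hUm hUb using h
  obtain ⟨s, hsK, hcov⟩ := hK.elim_nhds_subcover U (fun w _ => (hUo w).mem_nhds (hUm w))
  have hs_ne : s.Nonempty := by
    rcases hne with ⟨y, hy⟩
    rcases mem_iUnion₂.1 (hcov hy) with ⟨w, hw, _⟩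
    exact ⟨w, hw⟩
  set b := (s.image (fun w => ψ w - 1)).min' (hs_ne.image _)
  refine ⟨b, fun y hy => ?_⟩
  rcases mem_iUnion₂.1 (hcov hy) with ⟨w, hw, hyU⟩
  have h1 : ψ w - 1 < ψ y := hUb w (hsK w hw) y ⟨hyU, hy⟩
  have h2 : b ≤ ψ w - 1 :=
    Finset.min'_le _ _ (Finset.mem_image_of_mem _ hw)
  linarith

/-- Envelope argument for the Hopf formula: let
`f(t,x) = sup_{z ∈ K}{ z·x − ψ*(z) + t H(z) }` with `K` compact, `ψ*` lower
semi-continuous and `H` continuous. If `f` is differentiable at an interior point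
`(t,x)` (with `t, x₁, x₂ > 0`) and the supremum is attained at `z ∈ K`, then
`∇ₓ f(t,x) = z` and `∂ₜ f(t,x) = H(z)`; consequently
`∂ₜ f(t,x) = H(∇ₓ f(t,x))`. -/
theorem hopf_formula_solves_hj
    (K : Set (ℝ × ℝ)) (hK : IsCompact K)
    (ψs : ℝ × ℝ → ℝ) (hψs : LowerSemicontinuousOn ψs K)
    (H : ℝ × ℝ → ℝ) (hH : Continuous H)
    (f : ℝ × (ℝ × ℝ) → ℝ)
    (hf : ∀ p : ℝ × (ℝ × ℝ),
      f p = sSup ((fun z : ℝ × ℝ =>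
        z.1 * p.2.1 + z.2 * p.2.2 - ψs z + p.1 * H z) '' K))
    (t : ℝ) (x : ℝ × ℝ) (ht : 0 < t) (hx1 : 0 < x.1) (hx2 : 0 < x.2)
    (z : ℝ × ℝ) (hzK : z ∈ K)
    (hattain : f (t, x) = z.1 * x.1 + z.2 * x.2 - ψs z + t * H z)
    (D : ℝ × (ℝ × ℝ) →L[ℝ] ℝ) (hD : HasFDerivAt f D (t, x)) :
    D (0, (1, 0)) = z.1 ∧ D (0, (0, 1)) = z.2 ∧ D (1, (0, 0)) = H z ∧
      D (1, (0, 0)) = H (D (0, (1, 0)), D (0, (0, 1))) := by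
  obtain ⟨m, hm⟩ := lsc_bddBelow_on_compact hK hψs
  -- g is the affine minorant touching f at (t,x)
  set g : ℝ × (ℝ × ℝ) → ℝ :=
    fun p => z.1 * p.2.1 + z.2 * p.2.2 - ψs z + p.1 * H z with hg_def
  have hle : ∀ p : ℝ × (ℝ × ℝ), g p ≤ f p := by
    intro p
    rw [hf p]
    have hcont : Continuous (fun w : ℝ × ℝ =>
        w.1 * p.2.1 + w.2 * p.2.2 + p.1 * H w) := by fun_prop
    obtain ⟨M, hM⟩ := (hK.image hcont).bddAbove
    have hbdd : BddAbove ((fun w : ℝ × ℝ =>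
        w.1 * p.2.1 + w.2 * p.2.2 - ψs w + p.1 * H w) '' K) := by
      refine ⟨M - m, ?_⟩
      rintro _ ⟨w, hw, rfl⟩
      have h1 : w.1 * p.2.1 + w.2 * p.2.2 + p.1 * H w ≤ M :=
        hM (mem_image_of_mem _ hw)
      have h2 := hm w hw
      simp only [upperBounds, mem_setOf_eq] at *
      linarith
    exact le_csSup hbdd (mem_image_of_mem _ hzK)
  -- derivative of g
  set L : ℝ × (ℝ × ℝ) →L[ℝ] ℝ :=
    (z.1 • ((ContinuousLinearMap.fst ℝ ℝ ℝ).comp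
        (ContinuousLinearMap.snd ℝ ℝ (ℝ × ℝ))) +
      z.2 • ((ContinuousLinearMap.snd ℝ ℝ ℝ).comp
        (ContinuousLinearMap.snd ℝ ℝ (ℝ × ℝ)))) +
      H z • (ContinuousLinearMap.fst ℝ ℝ (ℝ × ℝ)) with hL_def
  have hgD : HasFDerivAt g L (t, x) := by
    have h1 : HasFDerivAt (fun p : ℝ × (ℝ × ℝ) => z.1 * p.2.1)
        (z.1 • ((ContinuousLinearMap.fst ℝ ℝ ℝ).comp
          (ContinuousLinearMap.snd ℝ ℝ (ℝ × ℝ)))) (t, x) :=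
      (hasFDerivAt_snd.fst).const_mul z.1
    have h2 : HasFDerivAt (fun p : ℝ × (ℝ × ℝ) => z.2 * p.2.2)
        (z.2 • ((ContinuousLinearMap.snd ℝ ℝ ℝ).comp
          (ContinuousLinearMap.snd ℝ ℝ (ℝ × ℝ)))) (t, x) :=
      (hasFDerivAt_snd.snd).const_mul z.2
    have h3 : HasFDerivAt (fun p : ℝ × (ℝ × ℝ) => p.1 * H z)
        (H z • (ContinuousLinearMap.fst ℝ ℝ (ℝ × ℝ))) (t, x) :=
      hasFDerivAt_fst.mul_const (H z)
    exact (((h1.add h2).sub_const (ψs z)).add h3)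
  -- f - g has a local minimum at (t,x)
  have hmin : IsLocalMin (fun p => f p - g p) (t, x) := by
    apply Filter.Eventually.of_forall
    intro p
    have h0 : f (t, x) - g (t, x) = 0 := by
      simp only [hg_def]
      rw [hattain]; ring
    have := hle p
    simp only [h0]
    linarith
  have hzero : D - L = 0 := hmin.hasFDerivAt_eq_zero (hD.sub hgD)
  have hDL : ∀ v, D v = L v := by
    intro v
    have := congrArg (fun T : ℝ × (ℝ × ℝ) →L[ℝ] ℝ => T v) hzero
    simpa [sub_eq_zero] using this
  have e1 : D (0, (1, 0)) = z.1 := by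
    rw [hDL]; simp [hL_def]
  have e2 : D (0, (0, 1)) = z.2 := by
    rw [hDL]; simp [hL_def]
  have e3 : D (1, (0, 0)) = H z := by
    rw [hDL]; simp [hL_def]
  exact ⟨e1, e2, e3, by rw [e3, e1, e2]⟩
end

section
/- Let ψ(y) = ψ₁(y₁) + ψ₂(y₂) with ψ₁, ψ₂ : ℝ₊ → ℝ, let H(z) = (2/α) z₁ z₂ for α > 0, and let f(t,x) = sup_{z ∈ K} inf_{y ∈ ℝ₊²} { z·(x−y) + ψ(y) + t H(z) } for a compact set K ⊂ ℝ₊². Then for every (t,x) in the interior of the domain, every sufficiently small λ ≥ 0, and e₁ = (1,0), e₂ = (0,1): f(t, x+λe₁+λe₂) + f(t,x) − f(t, x+λe₁) − f(t, x+λe₂) ≥ 0, provided that in the two mixed inequalities the suprema defining f(t, x+λe₁) and f(t, x+λe₂) are attained. -/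
open Set

/-- Partial convexity (supermodularity in `(x₁,x₂)`) of the Hopf formula
`f(t,x) = sup_{z ∈ K} inf_{y ∈ ℝ₊²} { z·(x−y) + ψ(y) + t H(z) }` with separable
`ψ(y) = ψ₁(y₁) + ψ₂(y₂)`, `H(z) = (2/α) z₁ z₂`, `K = [0,R] × [0, αρ/2]`, on the domain
`Ω_ρ = {(t,x) : 0 ≤ t ≤ 1, x ∈ ℝ₊², x₁ ≤ ρ(1−t)}`: for interior `(t,x)` and small
`λ ≥ 0`, provided the suprema defining `f(t,x+λe₁)` and `f(t,x+λe₂)` are attained,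
`f(t,x+λe₁+λe₂) + f(t,x) − f(t,x+λe₁) − f(t,x+λe₂) ≥ 0`. -/
theorem hopf_partial_convexity
    (ρ α R : ℝ) (hρ : 0 < ρ) (hα : 0 < α) (hR : 0 ≤ R)
    (ψ₁ ψ₂ : ℝ → ℝ)
    (K : Set (ℝ × ℝ)) (hK : K = Icc (0 : ℝ) R ×ˢ Icc (0 : ℝ) (α * ρ / 2))
    (Ω : Set (ℝ × (ℝ × ℝ)))
    (hΩ : Ω = {p : ℝ × (ℝ × ℝ) | 0 ≤ p.1 ∧ p.1 ≤ 1 ∧ 0 ≤ p.2.1 ∧ 0 ≤ p.2.2 ∧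
      p.2.1 ≤ ρ * (1 - p.1)})
    (f : ℝ → ℝ × ℝ → ℝ)
    -- `f(t,x) ≥ inf_y { z·(x−y) + ψ(y) + t H(z) }` for every `z ∈ K`:
    (hlow : ∀ p ∈ Ω, ∀ z ∈ K, ∀ δ > (0 : ℝ), ∃ y ∈ Ici (0 : ℝ × ℝ),
      z.1 * (p.2.1 - y.1) + z.2 * (p.2.2 - y.2) + (ψ₁ y.1 + ψ₂ y.2)
        + p.1 * ((2 / α) * z.1 * z.2) ≤ f p.1 p.2 + δ)
    -- `f(t,x) ≤ sup_z inf_y { z·(x−y) + ψ(y) + t H(z) }`: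
    (hupp : ∀ p ∈ Ω, ∀ δ > (0 : ℝ), ∃ z ∈ K, ∀ y ∈ Ici (0 : ℝ × ℝ),
      f p.1 p.2 - δ ≤ z.1 * (p.2.1 - y.1) + z.2 * (p.2.2 - y.2)
        + (ψ₁ y.1 + ψ₂ y.2) + p.1 * ((2 / α) * z.1 * z.2))
    (t : ℝ) (x : ℝ × ℝ) (hint : (t, x) ∈ interior Ω)
    (l : ℝ) (hl : 0 ≤ l) (hsmall : (t, (x.1 + l, x.2 + l)) ∈ Ω)
    -- the suprema defining `f(t, x+λe₁)` and `f(t, x+λe₂)` are attained: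
    (hatt1 : ∃ z ∈ K, ∀ y ∈ Ici (0 : ℝ × ℝ),
      f t (x.1 + l, x.2) ≤ z.1 * (x.1 + l - y.1) + z.2 * (x.2 - y.2)
        + (ψ₁ y.1 + ψ₂ y.2) + t * ((2 / α) * z.1 * z.2))
    (hatt2 : ∃ z ∈ K, ∀ y ∈ Ici (0 : ℝ × ℝ),
      f t (x.1, x.2 + l) ≤ z.1 * (x.1 - y.1) + z.2 * (x.2 + l - y.2)
        + (ψ₁ y.1 + ψ₂ y.2) + t * ((2 / α) * z.1 * z.2)) :
    0 ≤ f t (x.1 + l, x.2 + l) + f t x - f t (x.1 + l, x.2) - f t (x.1, x.2 + l) := by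
  obtain ⟨z, hzK, hz⟩ := hatt1
  obtain ⟨z', hz'K, hz'⟩ := hatt2
  have hΩx : (t, x) ∈ Ω := interior_subset hint
  have ht : 0 ≤ t := by rw [hΩ] at hΩx; exact hΩx.1
  have hΩx' : (t, x) ∈ Ω := interior_subset hint
  have hαinv : (0 : ℝ) ≤ 2 / α := by positivity
  have key : ∀ δ > (0 : ℝ), f t (x.1 + l, x.2) + f t (x.1, x.2 + l)
      ≤ f t (x.1 + l, x.2 + l) + f t x + (δ + δ) := by
    intro δ hδ
    rcases le_or_gt z'.2 z.2 with hcase | hcase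
    · obtain ⟨y, hy, hyle⟩ := hlow _ hsmall z hzK δ hδ
      obtain ⟨y', hy', hy'le⟩ := hlow _ hΩx' z' hz'K δ hδ
      have h1 := hz y hy
      have h2 := hz' y' hy'
      simp only at hyle hy'le h1 h2
      nlinarith [mul_nonneg hl (sub_nonneg.2 hcase)]
    rcases le_or_gt z.1 z'.1 with hcase1 | hcase1
    · obtain ⟨y, hy, hyle⟩ := hlow _ hsmall z' hz'K δ hδ
      obtain ⟨y', hy', hy'le⟩ := hlow _ hΩx' z hzK δ hδ
      have h1 := hz y' hy'
      have h2 := hz' y hy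
      simp only at hyle hy'le h1 h2
      nlinarith [mul_nonneg hl (sub_nonneg.2 hcase1)]
    · -- exchange argument
      rw [hK] at hzK hz'K
      have hmem1 : ((z.1, z'.2) : ℝ × ℝ) ∈ K := by
        rw [hK]; exact ⟨hzK.1, hz'K.2⟩
      have hmem2 : ((z'.1, z.2) : ℝ × ℝ) ∈ K := by
        rw [hK]; exact ⟨hz'K.1, hzK.2⟩
      obtain ⟨y, hy, hyle⟩ := hlow _ hsmall (z.1, z'.2) hmem1 δ hδ
      obtain ⟨y', hy', hy'le⟩ := hlow _ hΩx' (z'.1, z.2) hmem2 δ hδ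
      have hy1 : (0 : ℝ × ℝ) ≤ y := hy
      have hy2 : (0 : ℝ × ℝ) ≤ y' := hy'
      have h1 := hz (y.1, y'.2) (mem_Ici.2 ⟨hy1.1, hy2.2⟩)
      have h2 := hz' (y'.1, y.2) (mem_Ici.2 ⟨hy2.1, hy1.2⟩)
      simp only at hyle hy'le h1 h2
      have hterm : 0 ≤ t * ((2 / α) * ((z.1 - z'.1) * (z'.2 - z.2))) := by
        apply mul_nonneg ht
        apply mul_nonneg hαinv
        apply mul_nonneg (by linarith) (by linarith)
      nlinarith [hterm]
  have hle : f t (x.1 + l, x.2) + f t (x.1, x.2 + l)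
      ≤ f t (x.1 + l, x.2 + l) + f t x := by
    refine le_of_forall_pos_le_add fun ε hε => ?_
    have := key (ε / 2) (by linarith)
    linarith
  linarith
end

section
/- Let F and F̄ be real-valued functions of h₂ ∈ [0,M] with M ≥ 1 (F random, F̄ = E F deterministic), both absolutely continuous, satisfying for all h₂ ∈ [0,M]: |∂₂F̄| ≤ C₀, |∂₂F| ≤ C₀(1 + n^{−1/2}h₂^{−1/2}W) a.e., ∂₂²F̄ ≥ 0, and ∂₂²F ≥ −C₀ n^{−1/2} h₂^{−3/2} W in the distributional sense, where W ≥ 0 is a random variable. Then for every 0 < η < M, ∫_η^M |∂₂(F − F̄)|² dh₂ ≤ C ‖F − F̄‖_{L^∞([0,M])} (1 + n^{−1/2}η^{−1/2}W), where C depends only on C₀ and M. -/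
/-!
Write `G = F - F̄` and `g = G'`. Integrating by parts, `∫ g² = [G g] - ∫ G g'`, so
`∫_η^M g² ≤ ‖G‖_∞ (|g η| + |g M| + ∫_η^M |g'|)`. The boundary values of `g` are controlled by the
first-derivative bounds. The one-sided bound `g' ≥ -R'` with `R = F̄' - 2K x^{-1/2}` turns the total
variation into a telescoping sum: `|g'| ≤ g' + 2R'`, hence `∫ |g'| ≤ [g] + 2[R]`.
-/

open MeasureTheory Set intervalIntegral

section OneSidedDerivativeBound

variable {a b : ℝ} {g g' R R' : ℝ → ℝ}

theorem intervalIntegrable_deriv_of_neg_deriv_le (hab : a ≤ b)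
    (hg : ContinuousOn g (Icc a b)) (hR : ContinuousOn R (Icc a b))
    (hgg' : ∀ x ∈ Ioo a b, HasDerivAt g (g' x) x) (hRR' : ∀ x ∈ Ioo a b, HasDerivAt R (R' x) x)
    (hR' : IntervalIntegrable R' volume a b) (hle : ∀ x ∈ Ioo a b, -R' x ≤ g' x) :
    IntervalIntegrable g' volume a b := by
  have hsum : IntervalIntegrable (fun x => g' x + R' x) volume a b :=
    (intervalIntegrable_iff_integrableOn_Ioc_of_le hab).2 <|
      integrableOn_deriv_of_nonneg (hg.add hR) (fun x hx => (hgg' x hx).add (hRR' x hx))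
        (fun x hx => by linarith [hle x hx])
  simpa using hsum.sub hR'

theorem integral_abs_deriv_le_of_neg_deriv_le (hab : a ≤ b)
    (hg : ContinuousOn g (Icc a b)) (hR : ContinuousOn R (Icc a b))
    (hgg' : ∀ x ∈ Ioo a b, HasDerivAt g (g' x) x) (hRR' : ∀ x ∈ Ioo a b, HasDerivAt R (R' x) x)
    (hR' : IntervalIntegrable R' volume a b) (hR'_nonneg : ∀ x ∈ Ioo a b, 0 ≤ R' x)
    (hle : ∀ x ∈ Ioo a b, -R' x ≤ g' x) :
    ∫ x in a..b, |g' x| ≤ g b - g a + 2 * (R b - R a) := by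
  have hg' := intervalIntegrable_deriv_of_neg_deriv_le hab hg hR hgg' hRR' hR' hle
  calc ∫ x in a..b, |g' x| ≤ ∫ x in a..b, (g' x + 2 * R' x) :=
        integral_mono_on_of_le_Ioo hab hg'.abs (hg'.add (hR'.const_mul 2))
          (fun x hx => abs_le.2 ⟨by linarith [hle x hx], by linarith [hR'_nonneg x hx]⟩)
    _ = g b - g a + 2 * (R b - R a) := by
        rw [integral_add hg' (hR'.const_mul 2), intervalIntegral.integral_const_mul,
          integral_eq_sub_of_hasDerivAt_of_le hab hg hgg' hg',
          integral_eq_sub_of_hasDerivAt_of_le hab hR hRR' hR']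

end OneSidedDerivativeBound

theorem integral_sq_deriv_le {a b S : ℝ} {G g g' : ℝ → ℝ} (hab : a ≤ b)
    (hG : ContinuousOn G (Icc a b)) (hg : ContinuousOn g (Icc a b))
    (hGg : ∀ x ∈ Ioo a b, HasDerivAt G (g x) x) (hgg' : ∀ x ∈ Ioo a b, HasDerivAt g (g' x) x)
    (hg' : IntervalIntegrable g' volume a b) (hGS : ∀ x ∈ Icc a b, |G x| ≤ S) :
    ∫ x in a..b, g x ^ 2 ≤ S * (|g a| + |g b| + ∫ x in a..b, |g' x|) := by
  have huIcc : uIcc a b = Icc a b := uIcc_of_le hab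
  have hmin : Ioo (min a b) (max a b) = Ioo a b := by rw [min_eq_left hab, max_eq_right hab]
  have hmul : ∀ x ∈ Icc a b, ∀ y, |G x * y| ≤ S * |y| := fun x hx y => by
    rw [abs_mul]; exact mul_le_mul_of_nonneg_right (hGS x hx) (abs_nonneg _)
  have hGg' : IntervalIntegrable (fun x => G x * g' x) volume a b :=
    hg'.continuousOn_mul (huIcc ▸ hG)
  have hparts : ∫ x in a..b, G x * g' x = G b * g b - G a * g a - ∫ x in a..b, g x * g x :=
    integral_mul_deriv_eq_deriv_mul_of_hasDerivAt (huIcc ▸ hG) (huIcc ▸ hg) (hmin ▸ hGg)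
      (hmin ▸ hgg') (hg.intervalIntegrable_of_Icc hab) hg'
  have hbulk : |∫ x in a..b, G x * g' x| ≤ S * ∫ x in a..b, |g' x| :=
    calc |∫ x in a..b, G x * g' x| ≤ ∫ x in a..b, |G x * g' x| :=
          abs_integral_le_integral_abs hab
      _ ≤ ∫ x in a..b, S * |g' x| :=
          integral_mono_on hab hGg'.abs (hg'.abs.const_mul S) fun x hx => hmul x hx _
      _ = S * ∫ x in a..b, |g' x| := intervalIntegral.integral_const_mul _ _
  simp only [sq]
  linarith [abs_le.1 (hmul b (right_mem_Icc.2 hab) (g b)),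
    abs_le.1 (hmul a (left_mem_Icc.2 hab) (g a)), abs_le.1 hbulk]

theorem hasDerivAt_neg_two_mul_rpow_neg_half {x : ℝ} (hx : 0 < x) :
    HasDerivAt (fun y : ℝ => -2 * y ^ (-(1 / 2 : ℝ))) (x ^ (-(3 / 2 : ℝ))) x := by
  refine ((Real.hasDerivAt_rpow_const (Or.inl hx.ne')).const_mul (-2)).congr_deriv ?_
  norm_num
  ring

theorem integral_sq_deriv_le_of_neg_deriv_le {a b S : ℝ} {G g g' R R' : ℝ → ℝ} (hab : a ≤ b)
    (hGg : ∀ x ∈ Icc a b, HasDerivAt G (g x) x) (hgg' : ∀ x ∈ Icc a b, HasDerivAt g (g' x) x)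
    (hRR' : ∀ x ∈ Icc a b, HasDerivAt R (R' x) x) (hR' : IntervalIntegrable R' volume a b)
    (hR'_nonneg : ∀ x ∈ Icc a b, 0 ≤ R' x) (hle : ∀ x ∈ Icc a b, -R' x ≤ g' x)
    (hGS : ∀ x ∈ Icc a b, |G x| ≤ S) :
    ∫ x in a..b, g x ^ 2 ≤ S * (|g a| + |g b| + (g b - g a) + 2 * (R b - R a)) := by
  have hcont {f f' : ℝ → ℝ} (h : ∀ x ∈ Icc a b, HasDerivAt f (f' x) x) :
      ContinuousOn f (Icc a b) := fun x hx => (h x hx).continuousAt.continuousWithinAt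
  have hIoo {f f' : ℝ → ℝ} (h : ∀ x ∈ Icc a b, HasDerivAt f (f' x) x) :
      ∀ x ∈ Ioo a b, HasDerivAt f (f' x) x := fun x hx => h x (Ioo_subset_Icc_self hx)
  have hS : 0 ≤ S := (abs_nonneg _).trans (hGS a (left_mem_Icc.2 hab))
  have hle' : ∀ x ∈ Ioo a b, -R' x ≤ g' x := fun x hx => hle x (Ioo_subset_Icc_self hx)
  calc ∫ x in a..b, g x ^ 2 ≤ S * (|g a| + |g b| + ∫ x in a..b, |g' x|) :=
        integral_sq_deriv_le hab (hcont hGg) (hcont hgg') (hIoo hGg) (hIoo hgg')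
          (intervalIntegrable_deriv_of_neg_deriv_le hab (hcont hgg') (hcont hRR') (hIoo hgg')
            (hIoo hRR') hR' hle') hGS
    _ ≤ S * (|g a| + |g b| + (g b - g a) + 2 * (R b - R a)) := by
        rw [add_assoc _ (g b - g a)]
        gcongr
        exact integral_abs_deriv_le_of_neg_deriv_le hab (hcont hgg') (hcont hRR') (hIoo hgg')
          (hIoo hRR') hR' (fun x hx => hR'_nonneg x (Ioo_subset_Icc_self hx)) hle'

theorem abs_sub_le_of_abs_le_rpow_neg_half {C₀ α W η x u v : ℝ} (hα : 0 ≤ α) (hW : 0 ≤ W)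
    (hη : 0 < η) (hx : η ≤ x) (hu : |u| ≤ C₀ * (1 + α * x ^ (-(1 / 2 : ℝ)) * W))
    (hv : |v| ≤ C₀) :
    |u - v| ≤ 2 * C₀ * (1 + α * η ^ (-(1 / 2 : ℝ)) * W) := by
  have hC₀ : 0 ≤ C₀ := (abs_nonneg v).trans hv
  have hpow : α * x ^ (-(1 / 2 : ℝ)) * W ≤ α * η ^ (-(1 / 2 : ℝ)) * W := by
    have := Real.rpow_le_rpow_of_nonpos hη hx (show -(1 / 2 : ℝ) ≤ 0 by norm_num)
    gcongr
  have hT : 0 ≤ α * η ^ (-(1 / 2 : ℝ)) * W := by positivity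
  calc |u - v| ≤ |u| + |v| := abs_sub _ _
    _ ≤ C₀ * (1 + α * η ^ (-(1 / 2 : ℝ)) * W) + C₀ := by
        gcongr
        exact hu.trans (by gcongr)
    _ ≤ 2 * C₀ * (1 + α * η ^ (-(1 / 2 : ℝ)) * W) := by nlinarith

theorem integral_sq_deriv_sub_le {F Fb : ℝ → ℝ} {a b K S : ℝ} (ha : 0 < a) (hab : a ≤ b)
    (hF : ∀ x ∈ Icc a b, DifferentiableAt ℝ F x) (hFb : ∀ x ∈ Icc a b, DifferentiableAt ℝ Fb x)
    (hF' : ∀ x ∈ Icc a b, DifferentiableAt ℝ (deriv F) x)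
    (hFb' : ∀ x ∈ Icc a b, DifferentiableAt ℝ (deriv Fb) x)
    (hFb'' : ∀ x ∈ Icc a b, 0 ≤ deriv (deriv Fb) x) (hK : 0 ≤ K)
    (hF'' : ∀ x ∈ Icc a b, -(K * x ^ (-(3 / 2 : ℝ))) ≤ deriv (deriv F) x)
    (hS : ∀ x ∈ Icc a b, |F x - Fb x| ≤ S) :
    ∫ x in a..b, (deriv F x - deriv Fb x) ^ 2 ≤
      S * (|deriv F a - deriv Fb a| + |deriv F b - deriv Fb b|
        + (deriv F b - deriv Fb b - (deriv F a - deriv Fb a))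
        + 2 * (deriv Fb b - deriv Fb a) + 4 * K * a ^ (-(1 / 2 : ℝ))) := by
  have hpos : ∀ x ∈ Icc a b, 0 < x := fun x hx => ha.trans_le hx.1
  have hR : ∀ x ∈ Icc a b, HasDerivAt (fun y => deriv Fb y + K * (-2 * y ^ (-(1 / 2 : ℝ))))
      (deriv (deriv Fb) x + K * x ^ (-(3 / 2 : ℝ))) x := fun x hx =>
    (hFb' x hx).hasDerivAt.add ((hasDerivAt_neg_two_mul_rpow_neg_half (hpos x hx)).const_mul K)
  have hFb''_int : IntervalIntegrable (deriv (deriv Fb)) volume a b :=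
    (intervalIntegrable_iff_integrableOn_Ioc_of_le hab).2 <| integrableOn_deriv_of_nonneg
      (fun x hx => (hFb' x hx).continuousAt.continuousWithinAt)
      (fun x hx => (hFb' x (Ioo_subset_Icc_self hx)).hasDerivAt)
      (fun x hx => hFb'' x (Ioo_subset_Icc_self hx))
  have hR' : IntervalIntegrable (fun x => deriv (deriv Fb) x + K * x ^ (-(3 / 2 : ℝ))) volume a b :=
    hFb''_int.add ((intervalIntegral.intervalIntegrable_rpow
      (Or.inr fun h0 => (hpos 0 (uIcc_of_le hab ▸ h0)).false)).const_mul K)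
  have hS0 : 0 ≤ S := (abs_nonneg _).trans (hS a (left_mem_Icc.2 hab))
  have hbK : 0 ≤ K * b ^ (-(1 / 2 : ℝ)) := mul_nonneg hK (Real.rpow_nonneg (ha.le.trans hab) _)
  refine (integral_sq_deriv_le_of_neg_deriv_le hab
    (fun x hx => (hF x hx).hasDerivAt.sub (hFb x hx).hasDerivAt)
    (fun x hx => (hF' x hx).hasDerivAt.sub (hFb' x hx).hasDerivAt)
    hR hR' (fun x hx => ?_) (fun x hx => by linarith [hFb'' x hx, hF'' x hx]) hS).trans ?_
  · have := hFb'' x hx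
    have := Real.rpow_nonneg (hpos x hx).le (-(3 / 2 : ℝ))
    positivity
  · refine mul_le_mul_of_nonneg_left ?_ hS0
    linarith

theorem derivative_L2_from_Linfty_general
    (C₀ M : ℝ) (hC₀ : 0 < C₀) :
    ∃ C > 0, ∀ (n : ℕ) (W : ℝ) (F Fb : ℝ → ℝ) (η : ℝ),
      0 < n → 0 ≤ W → 0 < η → η < M →
      (∀ h₂ ∈ Ioc (0 : ℝ) M, DifferentiableAt ℝ F h₂ ∧ DifferentiableAt ℝ Fb h₂ ∧
        DifferentiableAt ℝ (deriv F) h₂ ∧ DifferentiableAt ℝ (deriv Fb) h₂) →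
      ContinuousOn F (Icc (0 : ℝ) M) → ContinuousOn Fb (Icc (0 : ℝ) M) →
      (∀ h₂ ∈ Ioc (0 : ℝ) M, |deriv Fb h₂| ≤ C₀) →
      (∀ h₂ ∈ Ioc (0 : ℝ) M,
        |deriv F h₂| ≤ C₀ * (1 + (n : ℝ) ^ (-(1 / 2 : ℝ)) * h₂ ^ (-(1 / 2 : ℝ)) * W)) →
      (∀ h₂ ∈ Ioc (0 : ℝ) M, 0 ≤ deriv (deriv Fb) h₂) →
      (∀ h₂ ∈ Ioc (0 : ℝ) M,
        -(C₀ * (n : ℝ) ^ (-(1 / 2 : ℝ)) * h₂ ^ (-(3 / 2 : ℝ)) * W) ≤ deriv (deriv F) h₂) →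
      (∫ h₂ in Ioc η M, (deriv F h₂ - deriv Fb h₂) ^ 2)
        ≤ C * sSup ((fun h₂ => |F h₂ - Fb h₂|) '' Icc (0 : ℝ) M)
            * (1 + (n : ℝ) ^ (-(1 / 2 : ℝ)) * η ^ (-(1 / 2 : ℝ)) * W) := by
  refine ⟨12 * C₀, by positivity, ?_⟩
  intro n W F Fb η _ hW hη hηM hdiff hFc hFbc hFb' hF' hFb'' hF''
  set α : ℝ := (n : ℝ) ^ (-(1 / 2 : ℝ))
  set T : ℝ := α * η ^ (-(1 / 2 : ℝ)) * W
  set S : ℝ := sSup ((fun h₂ => |F h₂ - Fb h₂|) '' Icc (0 : ℝ) M)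
  have hsub : Icc η M ⊆ Ioc 0 M := fun x hx => ⟨hη.trans_le hx.1, hx.2⟩
  have hS : ∀ x ∈ Icc η M, |F x - Fb x| ≤ S := fun x hx =>
    le_csSup (isCompact_Icc.bddAbove_image (hFc.sub hFbc).abs)
      ⟨x, Icc_subset_Icc_left hη.le hx, rfl⟩
  have hg : ∀ x ∈ Icc η M, |deriv F x - deriv Fb x| ≤ 2 * C₀ * (1 + T) := fun x hx =>
    abs_sub_le_of_abs_le_rpow_neg_half (by positivity) hW hη hx.1 (hF' x (hsub hx))
      (hFb' x (hsub hx))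
  have hηmem : η ∈ Icc η M := left_mem_Icc.2 hηM.le
  have hMmem : M ∈ Icc η M := right_mem_Icc.2 hηM.le
  have hS0 : 0 ≤ S := (abs_nonneg _).trans (hS η hηmem)
  rw [← intervalIntegral.integral_of_le hηM.le]
  refine (integral_sq_deriv_sub_le (K := C₀ * α * W) hη hηM.le
    (fun x hx => (hdiff x (hsub hx)).1) (fun x hx => (hdiff x (hsub hx)).2.1)
    (fun x hx => (hdiff x (hsub hx)).2.2.1) (fun x hx => (hdiff x (hsub hx)).2.2.2)
    (fun x hx => hFb'' x (hsub hx)) (by positivity)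
    (fun x hx => by linarith [hF'' x (hsub hx)]) hS).trans ?_
  calc _ ≤ S * (12 * C₀ * (1 + T)) := by
        refine mul_le_mul_of_nonneg_left ?_ hS0
        linarith [hg η hηmem, hg M hMmem, abs_le.1 (hg η hηmem), abs_le.1 (hg M hMmem),
          abs_le.1 (hFb' η (hsub hηmem)), abs_le.1 (hFb' M (hsub hMmem)),
          (by ring : C₀ * α * W * η ^ (-(1 / 2 : ℝ)) = C₀ * T)]
    _ = 12 * C₀ * S * (1 + T) := by ring

/-- Key interpolation step: if `F, F̄ : [0,M] → ℝ` (with `M ≥ 1`) satisfy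
`|∂₂F̄| ≤ C₀`, `|∂₂F| ≤ C₀(1 + n^{-1/2} h₂^{-1/2} W)`, `∂₂²F̄ ≥ 0` and
`∂₂²F ≥ −C₀ n^{-1/2} h₂^{-3/2} W` on `(0,M]` for some `W ≥ 0`, then for every
`0 < η < M`,
`∫_η^M |∂₂(F − F̄)|² ≤ C ‖F − F̄‖_{L^∞([0,M])} (1 + n^{-1/2} η^{-1/2} W)`,
where `C` depends only on `C₀` and `M`. -/
theorem derivative_L2_from_Linfty
    (C₀ M : ℝ) (hC₀ : 0 < C₀) (hM : 1 ≤ M) :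
    ∃ C > 0, ∀ (n : ℕ) (W : ℝ) (F Fb : ℝ → ℝ) (η : ℝ),
      0 < n → 0 ≤ W → 0 < η → η < M →
      (∀ h₂ ∈ Ioc (0 : ℝ) M, DifferentiableAt ℝ F h₂ ∧ DifferentiableAt ℝ Fb h₂ ∧
        DifferentiableAt ℝ (deriv F) h₂ ∧ DifferentiableAt ℝ (deriv Fb) h₂) →
      ContinuousOn F (Icc (0 : ℝ) M) → ContinuousOn Fb (Icc (0 : ℝ) M) →
      (∀ h₂ ∈ Ioc (0 : ℝ) M, |deriv Fb h₂| ≤ C₀) →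
      (∀ h₂ ∈ Ioc (0 : ℝ) M,
        |deriv F h₂| ≤ C₀ * (1 + (n : ℝ) ^ (-(1 / 2 : ℝ)) * h₂ ^ (-(1 / 2 : ℝ)) * W)) →
      (∀ h₂ ∈ Ioc (0 : ℝ) M, 0 ≤ deriv (deriv Fb) h₂) →
      (∀ h₂ ∈ Ioc (0 : ℝ) M,
        -(C₀ * (n : ℝ) ^ (-(1 / 2 : ℝ)) * h₂ ^ (-(3 / 2 : ℝ)) * W) ≤ deriv (deriv F) h₂) →
      (∫ h₂ in Ioc η M, (deriv F h₂ - deriv Fb h₂) ^ 2)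
        ≤ C * sSup ((fun h₂ => |F h₂ - Fb h₂|) '' Icc (0 : ℝ) M)
            * (1 + (n : ℝ) ^ (-(1 / 2 : ℝ)) * η ^ (-(1 / 2 : ℝ)) * W) :=
  derivative_L2_from_Linfty_general C₀ M hC₀
end

section
/- Let ρ > 0, α > 0, and let ψ₁ : [0,ρ] → ℝ and ψ₂ : ℝ₊ → ℝ be Lipschitz, nondecreasing, and convex with ψ₂ satisfying ψ₂(y) − ψ₂(y') ≤ (αρ/2)(y−y') for y ≥ y'. Set ψ(x) = ψ₁(x₁) + ψ₂(x₂). Then the function f(t,x) = sup_{z ∈ ℝ₊ × [0, αρ/2]} inf_{y ∈ [0,ρ] × ℝ₊} { z·(x−y) + ψ(y) + (2t/α) z₁ z₂ } is finite on Ω = {(t,x) : t ∈ [0,1], x₁ ∈ [0, ρ(1−t)], x₂ ≥ 0}, and f(0,x) = ψ(x) for all x ∈ [0,ρ] × ℝ₊. -/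
/-!
Both claims follow by testing the sup–inf against well-chosen points. On `Ω`, the choice
`y = (ρ, x₂)` bounds every inner infimum by `ψ₁ ρ + ψ₂ x₂`, because
`x₁ + (2t/α) z₂ ≤ ρ(1 - t) + tρ = ρ`, while `z = 0` bounds the supremum below by
`ψ₁ 0 + ψ₂ 0`. At `t = 0`, the choice `y = x` gives `f(0,x) ≤ ψ(x)`, and the reverse
inequality is witnessed by `z = (s₁, s₂)` with `sᵢ` a nonnegative subgradient of `ψᵢ` at `xᵢ`;
the slope bound on `ψ₂` puts `s₂` in `[0, αρ/2]`, and at the endpoint `x₁ = ρ` the Lipschitz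
constant of `ψ₁` serves as `s₁`.
-/

open Set

section SupInf

variable {ι κ : Type*} {Z : Set ι} {Y : Set κ} {F : ι → κ → ℝ} {c : ℝ}

lemma iSup₂_iInf₂_coe_le (h : ∀ z ∈ Z, ∃ y ∈ Y, F z y ≤ c) :
    ⨆ z ∈ Z, ⨅ y ∈ Y, (F z y : EReal) ≤ c :=
  iSup₂_le fun z hz => by
    obtain ⟨y, hy, hle⟩ := h z hz
    exact (iInf₂_le y hy).trans (EReal.coe_le_coe_iff.2 hle)

lemma le_iSup₂_iInf₂_coe {z : ι} (hz : z ∈ Z) (h : ∀ y ∈ Y, c ≤ F z y) :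
    (c : EReal) ≤ ⨆ z ∈ Z, ⨅ y ∈ Y, (F z y : EReal) :=
  (le_iInf₂ fun y hy => EReal.coe_le_coe_iff.2 (h y hy)).trans (le_iSup₂ (f := fun z _ =>
    ⨅ y ∈ Y, (F z y : EReal)) z hz)

end SupInf

lemma EReal.exists_eq_coe_of_le_of_le {a b : ℝ} {x : EReal} (ha : (a : EReal) ≤ x)
    (hb : x ≤ b) : ∃ r : ℝ, x = r :=
  ⟨x.toReal, (EReal.coe_toReal (hb.trans_lt (EReal.coe_lt_top b)).ne
    ((EReal.bot_lt_coe a).trans_le ha).ne').symm⟩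

section Subgradient

variable {g : ℝ → ℝ} {D : Set ℝ} {x : ℝ}

/-- The infimum of the right slopes at `x` is a subgradient at `x`; monotonicity makes it
nonnegative and, in particular, makes the right slopes bounded below. -/
lemma ConvexOn.exists_nonneg_subgradient_of_monotoneOn (hconv : ConvexOn ℝ D g)
    (hmono : MonotoneOn g D) (hx : x ∈ D) (hright : (D ∩ Ioi x).Nonempty) :
    ∃ s : ℝ, 0 ≤ s ∧ (∀ y ∈ D ∩ Ioi x, s ≤ (g y - g x) / (y - x)) ∧
      ∀ y ∈ D, g x + s * (y - x) ≤ g y := by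
  set S : Set ℝ := (fun y => (g y - g x) / (y - x)) '' (D ∩ Ioi x)
  have hSne : S.Nonempty := hright.image _
  have hS_nonneg : ∀ b ∈ S, 0 ≤ b := by
    rintro _ ⟨y, ⟨hyD, hxy⟩, rfl⟩
    exact div_nonneg (sub_nonneg.2 (hmono hx hyD hxy.le)) (sub_nonneg.2 hxy.le)
  have hS_le : ∀ y ∈ D ∩ Ioi x, sInf S ≤ (g y - g x) / (y - x) :=
    fun y hy => csInf_le ⟨0, hS_nonneg⟩ ⟨y, hy, rfl⟩
  refine ⟨sInf S, le_csInf hSne hS_nonneg, hS_le, fun y hyD => ?_⟩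
  rcases lt_trichotomy y x with hyx | rfl | hxy
  · have hleft : (g x - g y) / (x - y) ≤ sInf S := by
      refine le_csInf hSne ?_
      rintro _ ⟨p, ⟨hpD, hxp⟩, rfl⟩
      exact hconv.slope_mono_adjacent hyD hpD hyx hxp
    rw [div_le_iff₀ (sub_pos.2 hyx)] at hleft
    linarith
  · simp
  · have := hS_le y ⟨hyD, hxy⟩
    rw [le_div_iff₀ (sub_pos.2 hxy)] at this
    linarith

lemma exists_nonneg_subgradient_Icc {a b : ℝ} {K : NNReal}
    (hlip : LipschitzOnWith K g (Icc a b)) (hmono : MonotoneOn g (Icc a b))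
    (hconv : ConvexOn ℝ (Icc a b) g) (hx : x ∈ Icc a b) :
    ∃ s : ℝ, 0 ≤ s ∧ ∀ y ∈ Icc a b, g x + s * (y - x) ≤ g y := by
  rcases hx.2.lt_or_eq with hxb | rfl
  · obtain ⟨s, hs, -, hsub⟩ := hconv.exists_nonneg_subgradient_of_monotoneOn hmono hx
      ⟨b, right_mem_Icc.2 (hx.1.trans hxb.le), hxb⟩
    exact ⟨s, hs, hsub⟩
  · refine ⟨K, K.2, fun y hy => ?_⟩
    have hdist := hlip.dist_le_mul x hx y hy
    rw [Real.dist_eq, Real.dist_eq, abs_of_nonneg (sub_nonneg.2 hy.2)] at hdist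
    linarith [le_abs_self (g x - g y)]

lemma exists_subgradient_mem_Icc_of_slope_le {a c : ℝ} (hmono : MonotoneOn g (Ici a))
    (hconv : ConvexOn ℝ (Ici a) g)
    (hslope : ∀ y' y : ℝ, a ≤ y' → y' ≤ y → g y - g y' ≤ c * (y - y')) (hx : a ≤ x) :
    ∃ s ∈ Icc 0 c, ∀ y ∈ Ici a, g x + s * (y - x) ≤ g y := by
  have hx1 : x + 1 ∈ Ici a ∩ Ioi x := ⟨by simp only [mem_Ici]; linarith, lt_add_one x⟩
  obtain ⟨s, hs, hs_slope, hsub⟩ :=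
    hconv.exists_nonneg_subgradient_of_monotoneOn hmono hx ⟨_, hx1⟩
  refine ⟨s, ⟨hs, ?_⟩, hsub⟩
  have h₁ := hs_slope _ hx1
  have h₂ := hslope x (x + 1) hx (by linarith)
  simp only [add_sub_cancel_left, div_one, mul_one] at h₁ h₂
  linarith

end Subgradient

theorem hopf_formula_finite_and_initial_general
    (ρ α : ℝ) (hρ : 0 < ρ) (hα : 0 < α)
    (ψ₁ ψ₂ : ℝ → ℝ)
    (h₁lip : ∃ K : NNReal, LipschitzOnWith K ψ₁ (Icc (0 : ℝ) ρ))
    (h₁mono : MonotoneOn ψ₁ (Icc (0 : ℝ) ρ))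
    (h₁conv : ConvexOn ℝ (Icc (0 : ℝ) ρ) ψ₁)
    (h₂mono : MonotoneOn ψ₂ (Ici (0 : ℝ)))
    (h₂conv : ConvexOn ℝ (Ici (0 : ℝ)) ψ₂)
    (h₂slope : ∀ y' y : ℝ, 0 ≤ y' → y' ≤ y →
      ψ₂ y - ψ₂ y' ≤ (α * ρ / 2) * (y - y'))
    (val : ℝ → ℝ × ℝ → EReal)
    (hval : ∀ (t : ℝ) (x : ℝ × ℝ), val t x =
      ⨆ z ∈ (Ici (0 : ℝ) ×ˢ Icc (0 : ℝ) (α * ρ / 2)),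
        ⨅ y ∈ (Icc (0 : ℝ) ρ ×ˢ Ici (0 : ℝ)),
          ((z.1 * (x.1 - y.1) + z.2 * (x.2 - y.2) + ψ₁ y.1 + ψ₂ y.2
            + (2 * t / α) * z.1 * z.2 : ℝ) : EReal)) :
    (∀ t x₁ x₂ : ℝ, 0 ≤ t → t ≤ 1 → 0 ≤ x₁ → x₁ ≤ ρ * (1 - t) → 0 ≤ x₂ →
      ∃ r : ℝ, val t (x₁, x₂) = (r : EReal)) ∧
    (∀ x₁ x₂ : ℝ, 0 ≤ x₁ → x₁ ≤ ρ → 0 ≤ x₂ →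
      val 0 (x₁, x₂) = ((ψ₁ x₁ + ψ₂ x₂ : ℝ) : EReal)) := by
  have hc : 0 ≤ α * ρ / 2 := by positivity
  constructor
  · intro t x₁ x₂ ht₀ ht₁ hx₁ hx₁ρ hx₂
    rw [hval]
    refine EReal.exists_eq_coe_of_le_of_le (a := ψ₁ 0 + ψ₂ 0) (b := ψ₁ ρ + ψ₂ x₂)
      (le_iSup₂_iInf₂_coe (z := (0, 0)) ⟨self_mem_Ici, left_mem_Icc.2 hc⟩ ?_)
      (iSup₂_iInf₂_coe_le fun z hz => ⟨(ρ, x₂), ⟨right_mem_Icc.2 hρ.le, hx₂⟩, ?_⟩)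
    · rintro ⟨y₁, y₂⟩ ⟨hy₁, hy₂⟩
      have := h₁mono (left_mem_Icc.2 hρ.le) hy₁ hy₁.1
      have := h₂mono self_mem_Ici hy₂ hy₂
      simp only
      linarith
    · obtain ⟨hz₁, -, hz₂⟩ := hz
      have hdrift : 2 * t / α * z.2 ≤ t * ρ := by
        rw [div_mul_eq_mul_div, div_le_iff₀ hα]
        nlinarith
      have : z.1 * (x₁ - ρ + 2 * t / α * z.2) ≤ 0 :=
        mul_nonpos_of_nonneg_of_nonpos hz₁ (by linarith)
      simp only
      linarith
  · intro x₁ x₂ hx₁ hx₁ρ hx₂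
    rw [hval]
    obtain ⟨K, hK⟩ := h₁lip
    obtain ⟨s₁, hs₁, hsub₁⟩ := exists_nonneg_subgradient_Icc hK h₁mono h₁conv ⟨hx₁, hx₁ρ⟩
    obtain ⟨s₂, hs₂, hsub₂⟩ := exists_subgradient_mem_Icc_of_slope_le h₂mono h₂conv h₂slope hx₂
    refine le_antisymm (iSup₂_iInf₂_coe_le fun z _ => ⟨(x₁, x₂), ⟨⟨hx₁, hx₁ρ⟩, hx₂⟩, ?_⟩)
      (le_iSup₂_iInf₂_coe (z := (s₁, s₂)) ⟨hs₁, hs₂⟩ fun y hy => ?_)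
    · simp
    · have := hsub₁ y.1 hy.1
      have := hsub₂ y.2 hy.2
      simp only [mul_zero, zero_div, zero_mul, add_zero]
      linarith

/-- The Hopf formula
`f(t,x) = sup_{z ∈ ℝ₊ × [0, αρ/2]} inf_{y ∈ [0,ρ] × ℝ₊} { z·(x−y) + ψ(y) + (2t/α) z₁z₂ }`
with separable `ψ(x) = ψ₁(x₁) + ψ₂(x₂)`, `ψ₁, ψ₂` Lipschitz, nondecreasing and convex,
and `ψ₂` with slope at most `αρ/2`, is finite on
`Ω = {(t,x) : t ∈ [0,1], 0 ≤ x₁ ≤ ρ(1−t), x₂ ≥ 0}` and satisfies the initial condition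
`f(0,x) = ψ(x)` on `[0,ρ] × ℝ₊`. -/
theorem hopf_formula_finite_and_initial
    (ρ α : ℝ) (hρ : 0 < ρ) (hα : 0 < α)
    (ψ₁ ψ₂ : ℝ → ℝ)
    (h₁lip : ∃ K : NNReal, LipschitzOnWith K ψ₁ (Icc (0 : ℝ) ρ))
    (h₁mono : MonotoneOn ψ₁ (Icc (0 : ℝ) ρ))
    (h₁conv : ConvexOn ℝ (Icc (0 : ℝ) ρ) ψ₁)
    (h₂lip : ∃ K : NNReal, LipschitzOnWith K ψ₂ (Ici (0 : ℝ)))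
    (h₂mono : MonotoneOn ψ₂ (Ici (0 : ℝ)))
    (h₂conv : ConvexOn ℝ (Ici (0 : ℝ)) ψ₂)
    (h₂slope : ∀ y' y : ℝ, 0 ≤ y' → y' ≤ y →
      ψ₂ y - ψ₂ y' ≤ (α * ρ / 2) * (y - y'))
    (val : ℝ → ℝ × ℝ → EReal)
    (hval : ∀ (t : ℝ) (x : ℝ × ℝ), val t x =
      ⨆ z ∈ (Ici (0 : ℝ) ×ˢ Icc (0 : ℝ) (α * ρ / 2)),
        ⨅ y ∈ (Icc (0 : ℝ) ρ ×ˢ Ici (0 : ℝ)),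
          ((z.1 * (x.1 - y.1) + z.2 * (x.2 - y.2) + ψ₁ y.1 + ψ₂ y.2
            + (2 * t / α) * z.1 * z.2 : ℝ) : EReal)) :
    (∀ t x₁ x₂ : ℝ, 0 ≤ t → t ≤ 1 → 0 ≤ x₁ → x₁ ≤ ρ * (1 - t) → 0 ≤ x₂ →
      ∃ r : ℝ, val t (x₁, x₂) = (r : EReal)) ∧
    (∀ x₁ x₂ : ℝ, 0 ≤ x₁ → x₁ ≤ ρ → 0 ≤ x₂ →
      val 0 (x₁, x₂) = ((ψ₁ x₁ + ψ₂ x₂ : ℝ) : EReal)) :=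
  hopf_formula_finite_and_initial_general ρ α hρ hα ψ₁ ψ₂ h₁lip h₁mono h₁conv h₂mono h₂conv h₂slope
    val hval
end
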